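/- Let A, B, C be n×n real symmetric positive definite matrices. Then for every k with 1 ≤ k ≤ n, λ_1(A,C)·λ_k(C,B) ≤ λ_k(A,B) ≤ λ_n(A,C)·λ_k(C,B). -/

import Mathlib

open Matrix

/-- The Euclidean norm of a vector. -/
noncomputable def enorm {m : Type*} [Fintype m] (v : m → ℝ) : ℝ :=
  Real.sqrt (∑ i, (v i) ^ 2)

/-- The `k`-th smallest generalized eigenvalue (counted with multiplicity) of the
symmetric pencil `(A, B)` with `B` positive definite, i.e. the `k`-th smallest root of
`det (A - λ B) = 0`.  It is defined as the `k`-th smallest eigenvalue of the Hermitian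
matrix `√(B⁻¹) * A * √(B⁻¹)`, which is similar to `B⁻¹ * A`.  Junk value `0` is returned
if `A` is not symmetric or `B` is not positive definite. -/
noncomputable def genEig {m : Type*} [Fintype m] [DecidableEq m]
    (A B : Matrix m m ℝ) (k : Fin (Fintype.card m)) : ℝ :=
  letI := Classical.propDecidable
  if h : A.IsHermitian ∧ B.PosDef then
    let S : Matrix m m ℝ := (h.2.inv).posSemidef.1.eigenvectorUnitary.1 *
      diagonal ((RCLike.ofReal : ℝ → ℝ) ∘ Real.sqrt ∘ (h.2.inv).posSemidef.1.eigenvalues) *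
      (star (h.2.inv).posSemidef.1.eigenvectorUnitary : Matrix m m ℝ)
    have hS : S.IsHermitian := by
      show IsHermitian (_ * _ * (star (h.2.inv).posSemidef.1.eigenvectorUnitary : Matrix m m ℝ))
      rw [star_eq_conjTranspose]
      exact isHermitian_mul_mul_conjTranspose _ (isHermitian_diagonal _)
    have hC : (S * A * S).IsHermitian := by
      clear_value S
      show (S * A * S)ᴴ = S * A * S
      rw [conjTranspose_mul, conjTranspose_mul, hS.eq, h.1.eq, Matrix.mul_assoc]
    let f : Fin (Fintype.card m) → ℝ := hC.eigenvalues₀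
    f (Tuple.sort f k)
  else 0

/-- The `k`-th smallest generalized eigenvalue of a pencil of `n × n` matrices,
indexed by `Fin n`.  `genEigFin A B 0` is the smallest one, `λ_1(A,B)`, and
`genEigFin A B (Fin.last _)` is the largest one, `λ_n(A,B)`. -/
noncomputable def genEigFin {n : ℕ} (A B : Matrix (Fin n) (Fin n) ℝ) (k : Fin n) : ℝ :=
  genEig A B (Fin.cast (Fintype.card_fin n).symm k)

/-- The (row-sum) lumping operator: `lump B` is the diagonal matrix whose `i`-th
diagonal entry is the sum of the absolute values of the entries of the `i`-th row of `B`. -/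
noncomputable def lump {m : Type*} [Fintype m] [DecidableEq m]
    (B : Matrix m m ℝ) : Matrix m m ℝ :=
  Matrix.diagonal fun i => ∑ j, |B i j|

/-- The banded part `D_i` of a matrix: it keeps all sub- and super-diagonals of index
smaller than `i` (i.e. the entries with `|j - k| < i`) and sets the rest to zero. -/
def diagBand {n : ℕ} (B : Matrix (Fin n) (Fin n) ℝ) (i : ℕ) : Matrix (Fin n) (Fin n) ℝ :=
  Matrix.of fun j k => if |((j : ℕ) : ℤ) - ((k : ℕ) : ℤ)| < (i : ℤ) then B j k else 0

/-- The lumped preconditioner `P_i = D_i + 𝓛(R_i)` where `B = D_i + R_i`, `D_i` being the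
banded part of `B` of bandwidth `i` and `R_i` the remainder. -/
noncomputable def precond {n : ℕ} (B : Matrix (Fin n) (Fin n) ℝ) (i : ℕ) :
    Matrix (Fin n) (Fin n) ℝ :=
  diagBand B i + lump (B - diagBand B i)

/-!
Write `S = √(B⁻¹)`, so that `λ_k(A, B)` is the `k`-th smallest eigenvalue of `S A S`.
The spectral bounds of `√(C⁻¹) A √(C⁻¹)`, conjugated by `√C`, give the Loewner sandwich
`λ_1(A, C) • C ≤ A ≤ λ_n(A, C) • C`; conjugating by `S` turns it into
`λ_1(A, C) • S C S ≤ S A S ≤ λ_n(A, C) • S C S`. Finally, `a • N ≤ b • M` with `a, b ≥ 0` forces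
`a λ_k(N) ≤ b λ_k(M)` (Courant–Fischer): counting dimensions, some nonzero `x` lies both in the
span of the eigenvectors of `M` for its `k` smallest eigenvalues and in that of the eigenvectors
of `N` for its `n - k + 1` largest ones, so `λ_k(N) ‖x‖² ≤ ⟪N x, x⟫` and
`⟪M x, x⟫ ≤ λ_k(M) ‖x‖²`.
-/

namespace OrthonormalBasis

open scoped RealInnerProductSpace

variable {ι E : Type*} [Fintype ι] [NormedAddCommGroup E] [InnerProductSpace ℝ E]

lemma inner_eq_zero_of_mem_span (b : OrthonormalBasis ι ℝ E) {p : ι → Prop} {x : E}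
    (hx : x ∈ Submodule.span ℝ (Set.range fun i : {i // p i} => b i)) {i : ι} (hi : ¬ p i) :
    ⟪b i, x⟫ = 0 := by
  have hle : Submodule.span ℝ (Set.range fun i : {i // p i} => b i) ≤ (ℝ ∙ b i)ᗮ := by
    rw [Submodule.span_le]
    rintro _ ⟨j, rfl⟩
    exact Submodule.mem_orthogonal_singleton_iff_inner_right.2
      (b.orthonormal.inner_eq_zero fun hij => hi (hij ▸ j.2))
  exact Submodule.mem_orthogonal_singleton_iff_inner_right.1 (hle hx)

lemma finrank_span_subtype (b : OrthonormalBasis ι ℝ E) (p : ι → Prop) [DecidablePred p] :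
    Module.finrank ℝ (Submodule.span ℝ (Set.range fun i : {i // p i} => b i)) =
      Fintype.card {i // p i} :=
  finrank_span_eq_card (b.orthonormal.comp _ Subtype.val_injective).linearIndependent

lemma exists_ne_zero_mem_span_inf_span [FiniteDimensional ℝ E] {n : ℕ}
    (hn : Module.finrank ℝ E = n)
    (v w : OrthonormalBasis (Fin n) ℝ E) (k : Fin n) :
    ∃ x ≠ (0 : E), x ∈ Submodule.span ℝ (Set.range fun i : {i // k ≤ i} => v i) ∧
      x ∈ Submodule.span ℝ (Set.range fun i : {i // i ≤ k} => w i) := by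
  set V := Submodule.span ℝ (Set.range fun i : {i // k ≤ i} => v i)
  set W := Submodule.span ℝ (Set.range fun i : {i // i ≤ k} => w i)
  have hV : Module.finrank ℝ V = n - k := by
    rw [v.finrank_span_subtype, Fintype.card_subtype, ← Fin.card_Ici]; congr 1; ext; simp
  have hW : Module.finrank ℝ W = k + 1 := by
    rw [w.finrank_span_subtype, Fintype.card_subtype, ← Fin.card_Iic]; congr 1; ext; simp
  have hsum := Submodule.finrank_sup_add_finrank_inf_eq V W
  have hsup := hn ▸ Submodule.finrank_le (V ⊔ W)
  have hinf : V ⊓ W ≠ ⊥ := by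
    intro h
    rw [h, finrank_bot] at hsum
    omega
  obtain ⟨x, hx, hx0⟩ := Submodule.exists_mem_ne_zero_of_ne_bot hinf
  exact ⟨x, hx0, hx.1, hx.2⟩

end OrthonormalBasis

namespace LinearMap.IsSymmetric

open scoped RealInnerProductSpace
open Module

variable {E : Type*} [NormedAddCommGroup E] [InnerProductSpace ℝ E] [FiniteDimensional ℝ E]
  {n : ℕ} (hn : finrank ℝ E = n) {T : E →ₗ[ℝ] E} (hT : T.IsSymmetric)

lemma inner_apply_self_eq_sum (x : E) :
    ⟪T x, x⟫ = ∑ i, hT.eigenvalues hn i * ⟪hT.eigenvectorBasis hn i, x⟫ ^ 2 := by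
  rw [← (hT.eigenvectorBasis hn).sum_inner_mul_inner]
  refine Finset.sum_congr rfl fun i _ => ?_
  rw [hT, apply_eigenvectorBasis, real_inner_smul_right, real_inner_comm x]
  simp only [RCLike.ofReal_real_eq_id, id_eq]
  ring

lemma inner_apply_self_le {x : E} {t : ℝ}
    (h : ∀ i, ⟪hT.eigenvectorBasis hn i, x⟫ ≠ 0 → hT.eigenvalues hn i ≤ t) :
    ⟪T x, x⟫ ≤ t * ‖x‖ ^ 2 := by
  rw [hT.inner_apply_self_eq_sum hn, ← (hT.eigenvectorBasis hn).sum_sq_inner_right,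
    Finset.mul_sum]
  refine Finset.sum_le_sum fun i _ => ?_
  by_cases hi : ⟪hT.eigenvectorBasis hn i, x⟫ = 0
  · simp [hi]
  · exact mul_le_mul_of_nonneg_right (h i hi) (sq_nonneg _)

lemma le_inner_apply_self {x : E} {t : ℝ}
    (h : ∀ i, ⟪hT.eigenvectorBasis hn i, x⟫ ≠ 0 → t ≤ hT.eigenvalues hn i) :
    t * ‖x‖ ^ 2 ≤ ⟪T x, x⟫ := by
  rw [hT.inner_apply_self_eq_sum hn, ← (hT.eigenvectorBasis hn).sum_sq_inner_right,
    Finset.mul_sum]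
  refine Finset.sum_le_sum fun i _ => ?_
  by_cases hi : ⟪hT.eigenvectorBasis hn i, x⟫ = 0
  · simp [hi]
  · exact mul_le_mul_of_nonneg_right (h i hi) (sq_nonneg _)

theorem mul_eigenvalues_le_mul_eigenvalues {M N : E →ₗ[ℝ] E} (hM : M.IsSymmetric)
    (hN : N.IsSymmetric) {a b : ℝ} (ha : 0 ≤ a) (hb : 0 ≤ b)
    (h : ∀ x, a * ⟪N x, x⟫ ≤ b * ⟪M x, x⟫) (k : Fin n) :
    a * hN.eigenvalues hn k ≤ b * hM.eigenvalues hn k := by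
  obtain ⟨x, hx0, hxM, hxN⟩ :=
    OrthonormalBasis.exists_ne_zero_mem_span_inf_span hn (hM.eigenvectorBasis hn)
      (hN.eigenvectorBasis hn) k
  have hM_le : ⟪M x, x⟫ ≤ hM.eigenvalues hn k * ‖x‖ ^ 2 :=
    hM.inner_apply_self_le hn fun i hi => hM.eigenvalues_antitone hn <| by
      by_contra hik
      exact hi ((hM.eigenvectorBasis hn).inner_eq_zero_of_mem_span hxM hik)
  have hN_ge : hN.eigenvalues hn k * ‖x‖ ^ 2 ≤ ⟪N x, x⟫ :=
    hN.le_inner_apply_self hn fun i hi => hN.eigenvalues_antitone hn <| by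
      by_contra hik
      exact hi ((hN.eigenvectorBasis hn).inner_eq_zero_of_mem_span hxN hik)
  have hx : 0 < ‖x‖ ^ 2 := by positivity
  refine le_of_mul_le_mul_right ?_ hx
  calc a * hN.eigenvalues hn k * ‖x‖ ^ 2 ≤ a * ⟪N x, x⟫ := by
        rw [mul_assoc]; exact mul_le_mul_of_nonneg_left hN_ge ha
    _ ≤ b * ⟪M x, x⟫ := h x
    _ ≤ b * hM.eigenvalues hn k * ‖x‖ ^ 2 := by
        rw [mul_assoc]; exact mul_le_mul_of_nonneg_left hM_le hb

end LinearMap.IsSymmetric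

open scoped MatrixOrder

namespace Matrix

variable {m : Type*} [Fintype m] [DecidableEq m]

namespace IsHermitian

variable {M N : Matrix m m ℝ}

lemma eigenvalues₀_sort (hM : M.IsHermitian) (k : Fin (Fintype.card m)) :
    hM.eigenvalues₀ (Tuple.sort hM.eigenvalues₀ k) = hM.eigenvalues₀ k.rev :=
  congrFun ((Tuple.comp_sort_eq_comp_iff_monotone (σ := Fin.revPerm)).2
    (hM.eigenvalues₀_antitone.comp Fin.rev_anti)).symm k

lemma spectrum_real_eq_range_eigenvalues₀ (hM : M.IsHermitian) :
    spectrum ℝ M = Set.range hM.eigenvalues₀ := by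
  rw [hM.spectrum_real_eq_range_eigenvalues]
  exact (Equiv.surjective _).range_comp _

lemma algebraMap_le_iff_forall_le_eigenvalues₀ (hM : M.IsHermitian) {t : ℝ} :
    algebraMap ℝ _ t ≤ M ↔ ∀ i, t ≤ hM.eigenvalues₀ i := by
  rw [algebraMap_le_iff_le_spectrum hM.isSelfAdjoint, hM.spectrum_real_eq_range_eigenvalues₀,
    Set.forall_mem_range]

lemma le_algebraMap_iff_forall_eigenvalues₀_le (hM : M.IsHermitian) {t : ℝ} :
    M ≤ algebraMap ℝ _ t ↔ ∀ i, hM.eigenvalues₀ i ≤ t := by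
  rw [le_algebraMap_iff_spectrum_le hM.isSelfAdjoint, hM.spectrum_real_eq_range_eigenvalues₀,
    Set.forall_mem_range]

theorem mul_eigenvalues₀_le_mul_eigenvalues₀ (hM : M.IsHermitian)
    (hN : N.IsHermitian) {a b : ℝ} (ha : 0 ≤ a) (hb : 0 ≤ b) (h : a • N ≤ b • M)
    (k : Fin (Fintype.card m)) : a * hN.eigenvalues₀ k ≤ b * hM.eigenvalues₀ k := by
  refine LinearMap.IsSymmetric.mul_eigenvalues_le_mul_eigenvalues _ _ _ ha hb (fun x => ?_) k
  have hx := h.dotProduct_mulVec_nonneg x.ofLp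
  simp only [star_trivial, sub_mulVec, dotProduct_sub, smul_mulVec, dotProduct_smul, smul_eq_mul,
    sub_nonneg] at hx
  simpa only [EuclideanSpace.inner_eq_star_dotProduct, ofLp_toLpLin, toLin'_apply, star_trivial]
    using hx

lemma sqrt_mul_mul_sqrt {A : Matrix m m ℝ} (hA : A.IsHermitian) (B : Matrix m m ℝ) :
    (CFC.sqrt B * A * CFC.sqrt B).IsHermitian := by
  have hS : (CFC.sqrt B)ᴴ = CFC.sqrt B := (CFC.sqrt_nonneg B).isSelfAdjoint
  rw [IsHermitian, conjTranspose_mul, conjTranspose_mul, hS, hA.eq, Matrix.mul_assoc]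

end IsHermitian

namespace PosDef

lemma sqrt_inv_eq_spectral {B : Matrix m m ℝ} (hB : B.PosDef) :
    CFC.sqrt B⁻¹ = hB.inv.posSemidef.1.eigenvectorUnitary.1 *
      diagonal ((RCLike.ofReal : ℝ → ℝ) ∘ Real.sqrt ∘ hB.inv.posSemidef.1.eigenvalues) *
      (star hB.inv.posSemidef.1.eigenvectorUnitary : Matrix m m ℝ) := by
  rw [CFC.sqrt_eq_real_sqrt _ hB.inv.posSemidef.nonneg, cfcₙ_eq_cfc, hB.inv.posSemidef.1.cfc_eq]
  rfl

lemma sqrt_mul_sqrt_inv {C : Matrix m m ℝ} (hC : C.PosDef) :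
    CFC.sqrt C * CFC.sqrt C⁻¹ = 1 ∧ CFC.sqrt C⁻¹ * CFC.sqrt C = 1 := by
  have hdet : IsUnit (CFC.sqrt C).det := by
    have : (CFC.sqrt C).det * (CFC.sqrt C).det = C.det := by
      rw [← det_mul, CFC.sqrt_mul_sqrt_self C hC.posSemidef.nonneg]
    exact isUnit_iff_ne_zero.2 fun h0 => hC.det_pos.ne' (by rw [← this, h0, zero_mul])
  rw [← hC.posSemidef.inv_sqrt]
  exact ⟨mul_nonsing_inv _ hdet, nonsing_inv_mul _ hdet⟩

lemma sqrt_inv_mul_self_mul_sqrt_inv {C : Matrix m m ℝ} (hC : C.PosDef) :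
    CFC.sqrt C⁻¹ * C * CFC.sqrt C⁻¹ = 1 := by
  obtain ⟨h₁, h₂⟩ := hC.sqrt_mul_sqrt_inv
  calc CFC.sqrt C⁻¹ * C * CFC.sqrt C⁻¹
      = CFC.sqrt C⁻¹ * (CFC.sqrt C * CFC.sqrt C) * CFC.sqrt C⁻¹ := by
        rw [CFC.sqrt_mul_sqrt_self C hC.posSemidef.nonneg]
    _ = (CFC.sqrt C⁻¹ * CFC.sqrt C) * (CFC.sqrt C * CFC.sqrt C⁻¹) := by
        simp only [Matrix.mul_assoc]
    _ = 1 := by rw [h₁, h₂, Matrix.one_mul]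

lemma sqrt_inv_mul_smul_self_mul_sqrt_inv {C : Matrix m m ℝ} (hC : C.PosDef) (c : ℝ) :
    CFC.sqrt C⁻¹ * (c • C) * CFC.sqrt C⁻¹ = algebraMap ℝ _ c := by
  rw [Matrix.mul_smul, Matrix.smul_mul, hC.sqrt_inv_mul_self_mul_sqrt_inv,
    Algebra.algebraMap_eq_smul_one]

lemma le_of_sqrt_inv_conj_le {C X Y : Matrix m m ℝ} (hC : C.PosDef)
    (h : CFC.sqrt C⁻¹ * X * CFC.sqrt C⁻¹ ≤ CFC.sqrt C⁻¹ * Y * CFC.sqrt C⁻¹) :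
    X ≤ Y := by
  obtain ⟨h₁, h₂⟩ := hC.sqrt_mul_sqrt_inv
  have hconj (Z : Matrix m m ℝ) :
      CFC.sqrt C * (CFC.sqrt C⁻¹ * Z * CFC.sqrt C⁻¹) * CFC.sqrt C = Z := by
    simp only [← Matrix.mul_assoc, h₁, Matrix.one_mul]
    rw [Matrix.mul_assoc, h₂, Matrix.mul_one]
  simpa only [hconj] using (CFC.sqrt_nonneg C).isSelfAdjoint.conjugate_le_conjugate h

end PosDef

end Matrix

section GeneralizedEigenvalues

variable {m : Type*} [Fintype m] [DecidableEq m] {A B C : Matrix m m ℝ}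

/-- Mathlib's `eigenvalues₀` are sorted decreasingly, whence `k.rev`. -/
lemma genEig_eq_eigenvalues₀_rev (hA : A.IsHermitian) (hB : B.PosDef) (k : Fin (Fintype.card m)) :
    genEig A B k = (hA.sqrt_mul_mul_sqrt B⁻¹).eigenvalues₀ k.rev := by
  -- `genEig` is built with classical decidability.
  obtain rfl : ‹DecidableEq m› = fun a b => Classical.propDecidable (a = b) :=
    Subsingleton.elim _ _
  classical
  rw [genEig, dif_pos ⟨hA, hB⟩]
  simp only
  rw [IsHermitian.eigenvalues₀_sort]
  congr 3 <;> exact hB.sqrt_inv_eq_spectral.symm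

lemma genEig_monotone (hA : A.IsHermitian) (hB : B.PosDef) : Monotone (genEig A B) := by
  intro i j hij
  simp only [genEig_eq_eigenvalues₀_rev hA hB]
  exact IsHermitian.eigenvalues₀_antitone _ (Fin.rev_le_rev.2 hij)

lemma genEig_nonneg (hA : A.PosSemidef) (hB : B.PosDef) (k : Fin (Fintype.card m)) :
    0 ≤ genEig A B k := by
  have hP : 0 ≤ CFC.sqrt B⁻¹ * A * CFC.sqrt B⁻¹ :=
    IsSelfAdjoint.conjugate_nonneg hA.nonneg (CFC.sqrt_nonneg _).isSelfAdjoint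
  rw [genEig_eq_eigenvalues₀_rev hA.1 hB]
  rw [← map_zero (algebraMap ℝ (Matrix m m ℝ))] at hP
  exact (hA.1.sqrt_mul_mul_sqrt B⁻¹).algebraMap_le_iff_forall_le_eigenvalues₀.1 hP _

lemma smul_le_of_forall_le_genEig (hA : A.IsHermitian) (hC : C.PosDef) {c : ℝ}
    (h : ∀ i, c ≤ genEig A C i) : c • C ≤ A := by
  refine hC.le_of_sqrt_inv_conj_le ?_
  rw [hC.sqrt_inv_mul_smul_self_mul_sqrt_inv]
  refine (hA.sqrt_mul_mul_sqrt C⁻¹).algebraMap_le_iff_forall_le_eigenvalues₀.2 fun i => ?_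
  simpa only [genEig_eq_eigenvalues₀_rev hA hC, Fin.rev_rev] using h i.rev

lemma le_smul_of_forall_genEig_le (hA : A.IsHermitian) (hC : C.PosDef) {d : ℝ}
    (h : ∀ i, genEig A C i ≤ d) : A ≤ d • C := by
  refine hC.le_of_sqrt_inv_conj_le ?_
  rw [hC.sqrt_inv_mul_smul_self_mul_sqrt_inv]
  refine (hA.sqrt_mul_mul_sqrt C⁻¹).le_algebraMap_iff_forall_eigenvalues₀_le.2 fun i => ?_
  simpa only [genEig_eq_eigenvalues₀_rev hA hC, Fin.rev_rev] using h i.rev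

lemma mul_genEig_le_mul_genEig (hA : A.IsHermitian) (hB : B.PosDef) (hC : C.IsHermitian)
    {a b : ℝ} (ha : 0 ≤ a) (hb : 0 ≤ b) (h : a • C ≤ b • A) (k : Fin (Fintype.card m)) :
    a * genEig C B k ≤ b * genEig A B k := by
  have h' := (CFC.sqrt_nonneg B⁻¹).isSelfAdjoint.conjugate_le_conjugate h
  simp only [Matrix.mul_smul, Matrix.smul_mul] at h'
  rw [genEig_eq_eigenvalues₀_rev hA hB, genEig_eq_eigenvalues₀_rev hC hB]
  exact IsHermitian.mul_eigenvalues₀_le_mul_eigenvalues₀ _ _ ha hb h' k.rev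

end GeneralizedEigenvalues

/-- `λ_1(A,C)·λ_k(C,B) ≤ λ_k(A,B) ≤ λ_n(A,C)·λ_k(C,B)`. -/
theorem stmt_2 {n : ℕ} (A B C : Matrix (Fin (n + 1)) (Fin (n + 1)) ℝ)
    (hA : A.PosDef) (hB : B.PosDef) (hC : C.PosDef) :
    ∀ k : Fin (n + 1),
      genEigFin A C 0 * genEigFin C B k ≤ genEigFin A B k ∧
      genEigFin A B k ≤ genEigFin A C (Fin.last n) * genEigFin C B k := by
  intro k
  have hmin : ∀ i, genEigFin A C 0 ≤ genEig A C i := fun i =>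
    genEig_monotone hA.isHermitian hC (Fin.le_def.2 (by simp))
  have hmax : ∀ i, genEig A C i ≤ genEigFin A C (Fin.last n) := fun i =>
    genEig_monotone hA.isHermitian hC (Fin.le_def.2 (by simpa [Nat.lt_succ_iff] using i.isLt))
  have hlow : genEigFin A C 0 • C ≤ (1 : ℝ) • A := by
    rw [one_smul]; exact smul_le_of_forall_le_genEig hA.isHermitian hC hmin
  have hup : (1 : ℝ) • A ≤ genEigFin A C (Fin.last n) • C := by
    rw [one_smul]; exact le_smul_of_forall_genEig_le hA.isHermitian hC hmax
  have hc0 : 0 ≤ genEigFin A C 0 := genEig_nonneg hA.posSemidef hC _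
  have hd0 : 0 ≤ genEigFin A C (Fin.last n) := genEig_nonneg hA.posSemidef hC _
  have hlower := mul_genEig_le_mul_genEig hA.isHermitian hB hC.isHermitian hc0 zero_le_one hlow
  have hupper := mul_genEig_le_mul_genEig hC.isHermitian hB hA.isHermitian zero_le_one hd0 hup
  simp only [one_mul] at hlower hupper
  exact ⟨hlower _, hupper _⟩
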